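/- arXiv:2112.09977 — 2 statements merged into one kernel-verified Lean document; each statement's English description precedes it below -/
import Mathlib

section
/- In a generalized topological space, arbitrary intersections of sλ-closed sets are sλ-closed; hence the collection of sλ-open sets forms a generalized topology on Y. -/
open Set

variable {Y : Type*}

/-- A generalized topology: contains ∅ and is closed under arbitrary unions. -/
def IsGT (γ : Set (Set Y)) : Prop := ∅ ∈ γ ∧ ∀ S ⊆ γ, ⋃₀ S ∈ γ

/-- γ-closure: intersection of all γ-closed supersets. -/
def gCl (γ : Set (Set Y)) (D : Set Y) : Set Y := ⋂₀ {C | Cᶜ ∈ γ ∧ D ⊆ C}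

/-- sγ-open set. -/
def SOpen (γ : Set (Set Y)) (D : Set Y) : Prop := ∃ V ∈ γ, V ⊆ D ∧ D ⊆ gCl γ V

/-- sγ-closed set. -/
def SClosed (γ : Set (Set Y)) (D : Set Y) : Prop := SOpen γ Dᶜ

/-- semi-kernel: intersection of all sγ-open supersets. -/
def sKer (γ : Set (Set Y)) (D : Set Y) : Set Y := ⋂₀ {G | SOpen γ G ∧ D ⊆ G}

/-- sγ-closure: intersection of all sγ-closed supersets. -/
def sCl (γ : Set (Set Y)) (D : Set Y) : Set Y := ⋂₀ {C | SClosed γ C ∧ D ⊆ C}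

/-- sλ-closed set. -/
def SLClosed (γ : Set (Set Y)) (D : Set Y) : Prop :=
  ∃ M N : Set Y, M = sKer γ M ∧ SClosed γ N ∧ D = M ∩ N

/-- sλ-open set. -/
def SLOpen (γ : Set (Set Y)) (D : Set Y) : Prop := SLClosed γ Dᶜ

/-- sλ-closure: intersection of all sλ-closed supersets. -/
def slCl (γ : Set (Set Y)) (D : Set Y) : Set Y := ⋂₀ {C | SLClosed γ C ∧ D ⊆ C}

/-- sλ-interior: union of all sλ-open subsets. -/
def slInt (γ : Set (Set Y)) (D : Set Y) : Set Y := ⋃₀ {U | SLOpen γ U ∧ U ⊆ D}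

/-- sg_λ-closed set. -/
def SgClosed (γ : Set (Set Y)) (D : Set Y) : Prop :=
  ∀ V : Set Y, SLOpen γ V → D ⊆ V → slCl γ D ⊆ V

/-- sg_λ-open set. -/
def SgOpen (γ : Set (Set Y)) (D : Set Y) : Prop := SgClosed γ Dᶜ

/-- sλR₀: every sλ-open set contains the sλ-closure of each of its singletons. -/
def SLR0 (γ : Set (Set Y)) : Prop :=
  ∀ G : Set Y, SLOpen γ G → ∀ y ∈ G, slCl γ {y} ⊆ G

/-- sλR₁. -/
def SLR1 (γ : Set (Set Y)) : Prop :=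
  ∀ p q : Y, p ∉ slCl γ {q} →
    ∃ E F : Set Y, SLOpen γ E ∧ SLOpen γ F ∧ p ∈ E ∧ q ∈ F ∧ E ∩ F = ∅

/-- sλT₁. -/
def SLT1 (γ : Set (Set Y)) : Prop :=
  ∀ p q : Y, p ≠ q →
    ∃ E F : Set Y, SLOpen γ E ∧ SLOpen γ F ∧ p ∈ E ∧ q ∉ E ∧ q ∈ F ∧ p ∉ F

/-- sλT₂ (sλ-Hausdorff). -/
def SLT2 (γ : Set (Set Y)) : Prop :=
  ∀ p q : Y, p ≠ q →
    ∃ E F : Set Y, SLOpen γ E ∧ SLOpen γ F ∧ p ∈ E ∧ q ∈ F ∧ E ∩ F = ∅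

/-- sλ-regular. -/
def SLRegular (γ : Set (Set Y)) : Prop :=
  ∀ A : Set Y, SLClosed γ A → ∀ p : Y, p ∉ A →
    ∃ E F : Set Y, SLOpen γ E ∧ SLOpen γ F ∧ A ⊆ E ∧ p ∈ F ∧
      slCl γ E ∩ slCl γ F = ∅

/-- sλ-normal. -/
def SLNormal (γ : Set (Set Y)) : Prop :=
  ∀ A B : Set Y, SLClosed γ A → SLClosed γ B → A ∩ B = ∅ →
    ∃ E F : Set Y, SLOpen γ E ∧ SLOpen γ F ∧ A ⊆ E ∧ B ⊆ F ∧
      slCl γ E ∩ slCl γ F = ∅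

/-- sλ-compact. -/
def SLCompact (γ : Set (Set Y)) : Prop :=
  ∀ 𝒞 : Set (Set Y), (∀ U ∈ 𝒞, SLOpen γ U) → ⋃₀ 𝒞 = univ →
    ∃ 𝒟 : Finset (Set Y), ↑𝒟 ⊆ 𝒞 ∧ ⋃₀ (𝒟 : Set (Set Y)) = univ

/-- sλ-weakly separated. -/
def SLWeaklySeparated (γ : Set (Set Y)) (G H : Set Y) : Prop :=
  (G ∩ slCl γ H) ∪ (H ∩ slCl γ G) = ∅

/-- sλ-completely normal. -/
def SLCompletelyNormal (γ : Set (Set Y)) : Prop :=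
  ∀ G H : Set Y, SLWeaklySeparated γ G H →
    ∃ U V : Set Y, SLOpen γ U ∧ SLOpen γ V ∧ G ⊆ U ∧ H ⊆ V ∧
      slCl γ U ∩ slCl γ V = ∅

/-- sλ-continuous real-valued function. -/
def SLContinuousReal (γ : Set (Set Y)) (f : Y → ℝ) : Prop :=
  ∀ s : Set ℝ, IsOpen s → SLOpen γ (f ⁻¹' s)


lemma gCl_mono (γ : Set (Set Y)) {A B : Set Y} (h : A ⊆ B) : gCl γ A ⊆ gCl γ B := by
  apply Set.sInter_subset_sInter
  rintro C ⟨hC, hBC⟩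
  exact ⟨hC, h.trans hBC⟩

lemma sKer_superset (γ : Set (Set Y)) (A : Set Y) : A ⊆ sKer γ A := by
  intro x hx
  rintro G ⟨_, hAG⟩
  exact hAG hx

lemma sKer_mono (γ : Set (Set Y)) {A B : Set Y} (h : A ⊆ B) : sKer γ A ⊆ sKer γ B := by
  apply Set.sInter_subset_sInter
  rintro G ⟨hG, hBG⟩
  exact ⟨hG, h.trans hBG⟩

lemma sOpen_sUnion (γ : Set (Set Y)) (hγ : IsGT γ) (T : Set (Set Y))
    (hT : ∀ G ∈ T, SOpen γ G) : SOpen γ (⋃₀ T) := by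
  choose V hVγ hVsub hVcl using hT
  classical
  refine ⟨⋃₀ {W | ∃ G, ∃ h : G ∈ T, W = V G h}, ?_, ?_, ?_⟩
  · apply hγ.2
    rintro W ⟨G, hG, rfl⟩
    exact hVγ G hG
  · rintro x ⟨W, ⟨G, hG, rfl⟩, hx⟩
    exact ⟨G, hG, hVsub G hG hx⟩
  · rintro x ⟨G, hG, hx⟩
    have h1 : V G hG ⊆ ⋃₀ {W | ∃ G, ∃ h : G ∈ T, W = V G h} := by
      intro y hy; exact ⟨V G hG, ⟨G, hG, rfl⟩, hy⟩
    exact gCl_mono γ h1 (hVcl G hG hx)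

theorem stmt1 (γ : Set (Set Y)) (hγ : IsGT γ) :
    (∀ S : Set (Set Y), (∀ A ∈ S, SLClosed γ A) → SLClosed γ (⋂₀ S)) ∧
      IsGT {U : Set Y | SLOpen γ U} := by
  have key : ∀ S : Set (Set Y), (∀ A ∈ S, SLClosed γ A) → SLClosed γ (⋂₀ S) := by
    intro S hS
    classical
    choose M N hM hN hMN using hS
    refine ⟨⋂₀ {W | ∃ A, ∃ h : A ∈ S, W = M A h}, ⋂₀ {W | ∃ A, ∃ h : A ∈ S, W = N A h},
      ?_, ?_, ?_⟩
    · apply Set.Subset.antisymm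
      · exact sKer_superset γ _
      · intro x hx
        rintro A ⟨B, hB, rfl⟩
        have h1 : ⋂₀ {W | ∃ A, ∃ h : A ∈ S, W = M A h} ⊆ M B hB :=
          Set.sInter_subset_of_mem ⟨B, hB, rfl⟩
        have h2 := sKer_mono γ h1 hx
        rw [← hM B hB] at h2
        exact h2
    · show SOpen γ (⋂₀ {W | ∃ A, ∃ h : A ∈ S, W = N A h})ᶜ
      rw [Set.compl_sInter]
      have : compl '' {W | ∃ A, ∃ h : A ∈ S, W = N A h}
          = {W | ∃ A, ∃ h : A ∈ S, W = (N A h)ᶜ} := by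
        ext W
        constructor
        · rintro ⟨V, ⟨B, hB, rfl⟩, rfl⟩; exact ⟨B, hB, rfl⟩
        · rintro ⟨B, hB, rfl⟩; exact ⟨N B hB, ⟨B, hB, rfl⟩, rfl⟩
      rw [this]
      apply sOpen_sUnion γ hγ
      rintro G ⟨B, hB, rfl⟩
      exact hN B hB
    · ext x
      simp only [Set.mem_sInter, Set.mem_inter_iff]
      constructor
      · intro hx
        constructor
        · rintro W ⟨B, hB, rfl⟩
          have := hx B hB
          rw [hMN B hB] at this
          exact this.1
        · rintro W ⟨B, hB, rfl⟩
          have := hx B hB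
          rw [hMN B hB] at this
          exact this.2
      · rintro ⟨h1, h2⟩ B hB
        rw [hMN B hB]
        exact ⟨h1 _ ⟨B, hB, rfl⟩, h2 _ ⟨B, hB, rfl⟩⟩
  refine ⟨key, ?_, ?_⟩
  · show SLClosed γ (∅ : Set Y)ᶜ
    rw [Set.compl_empty]
    have := key ∅ (by simp)
    simpa using this
  · intro S hS
    show SLClosed γ (⋃₀ S)ᶜ
    rw [Set.compl_sUnion]
    apply key
    rintro A ⟨B, hB, rfl⟩
    exact hS hB
end

section
/- A generalized topological space (Y, γ) is sλ-normal if and only if for every pair of sλ-open sets E, F with E ∪ F = Y there exist sλ-closed sets A ⊆ E and B ⊆ F with A ∪ B = Y. -/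
open Set

variable {Y : Type*}

theorem stmt13 (γ : Set (Set Y)) (hγ : IsGT γ) :
    SLNormal γ ↔
      ∀ E F : Set Y, SLOpen γ E → SLOpen γ F → E ∪ F = univ →
        ∃ A B : Set Y, SLClosed γ A ∧ SLClosed γ B ∧ A ⊆ E ∧ B ⊆ F ∧
          A ∪ B = univ := by

  have subCl : ∀ D : Set Y, D ⊆ slCl γ D := by
    intro D x hx
    exact fun C hC => hC.2 hx
  have clSub : ∀ D K : Set Y, SLClosed γ K → D ⊆ K → slCl γ D ⊆ K := by
    intro D K hK hDK
    exact sInter_subset_of_mem ⟨hK, hDK⟩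
  constructor
  · intro hN E F hE hF hEF
    obtain ⟨U, V, hU, hV, hEU, hFV, hUV⟩ := hN Eᶜ Fᶜ hE hF
      (by rw [← compl_union, hEF, compl_univ])
    refine ⟨Uᶜ, Vᶜ, hU, hV, ?_, ?_, ?_⟩
    · exact compl_subset_comm.mp hEU
    · exact compl_subset_comm.mp hFV
    · have hUVe : U ∩ V = ∅ :=
        subset_empty_iff.mp (hUV ▸ inter_subset_inter (subCl U) (subCl V))
      rw [← compl_inter, hUVe, compl_empty]
  · intro h A B hA hB hAB
    have hAo : SLOpen γ Aᶜ := by rw [SLOpen, compl_compl]; exact hA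
    have hBo : SLOpen γ Bᶜ := by rw [SLOpen, compl_compl]; exact hB
    obtain ⟨C, D, hC, hD, hCA, hDB, hCD⟩ := h Aᶜ Bᶜ hAo hBo
      (by rw [← compl_inter, hAB, compl_empty])
    have hDo : SLOpen γ Dᶜ := by rw [SLOpen, compl_compl]; exact hD
    obtain ⟨P, Q, hP, hQ, hPB, hQD, hPQ⟩ := h Bᶜ Dᶜ hBo hDo
      (by
        rw [eq_univ_iff_forall]
        intro x
        by_cases hx : x ∈ B
        · exact Or.inr (fun hxD => hDB hxD hx)
        · exact Or.inl hx)
    refine ⟨Cᶜ, Pᶜ, by rw [SLOpen, compl_compl]; exact hC,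
      by rw [SLOpen, compl_compl]; exact hP, fun x hx hxC => hCA hxC hx,
      fun x hx hxP => hPB hxP hx, ?_⟩
    have h1 : slCl γ Cᶜ ⊆ D := clSub _ _ hD (by
      intro x hx
      rcases (eq_univ_iff_forall.mp hCD) x with h' | h'
      · exact absurd h' hx
      · exact h')
    have h2 : slCl γ Pᶜ ⊆ Q := clSub _ _ hQ (by
      intro x hx
      rcases (eq_univ_iff_forall.mp hPQ) x with h' | h'
      · exact absurd h' hx
      · exact h')
    rw [eq_empty_iff_forall_notMem]
    rintro x ⟨hx1, hx2⟩
    exact hQD (h2 hx2) (h1 hx1)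
end
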